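/- Let γ > 0, τ > 0, X_1,…,X_N ∈ Σ_{I_1,…,I_d}, D ∈ Σ^r_{I_1,…,I_d} with every fiber of D along its last mode not identically zero, and Λ_0 ∈ Σ^N_r. Then strong duality holds for the Λ-subproblem: min_{Λ ∈ Σ^N_r} Σ_{i=1}^N [ H_{X_i}( D ×_{d+1} Λ[:,i] ) + (τ/2)‖Λ[:,i] − Λ_0[:,i]‖² ] = − min_{G ∈ ℝ^{I_1×⋯×I_d×N}} Σ_{i=1}^N [ H*_{X_i}(−G[:,i]) + τ F*_{Λ_0[:,i]}( (D ×_{≤d} G)[:,i] / τ ) ]. -/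

import Mathlib

/-!
The objective and the dual objective are both sums over the columns `i`, so both infima split
column by column and it suffices to prove duality for a single column. Making the optimal
coupling `T` a variable, one column is the minimisation of the convex continuous function
`⟨M², T⟩ + γ⟨T, log T⟩ + (τ/2)‖λ - λ₀‖²` over the compact convex set of pairs `(λ, T)` with
`λ ∈ Σ_r` and first marginal of `T` equal to `X_i`, under the linear constraint that the second
marginal of `T` is `D λ`. The Lagrangian dual function at the multiplier `-g` splits into a
supremum over `T`, which is `H*_{X_i}(-g)`, and a supremum over `λ`, which is
`τ F*_{λ₀}(Dᵀg/τ)`. Strong duality for such a problem follows by separating `(0, v - ε)`, with `v`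
the optimal value, from the image of the epigraph of the objective under `(z, t) ↦ (A z, t)`;
the separating functional has a positive `t`-coefficient because `(0, v)` lies in that image.
-/

noncomputable section

namespace WDL19

/-- The multi-index set `[I_1] × ⋯ × [I_d]`. -/
abbrev Idx {d : ℕ} (I : Fin d → ℕ) : Type := ∀ j : Fin d, Fin (I j)

/-- The set of `d`-dimensional joint probability mass functions on `[I_1] × ⋯ × [I_d]`. -/
def probSet {d : ℕ} (I : Fin d → ℕ) : Set (Idx I → ℝ) :=
  {X | (∀ a, 0 ≤ X a) ∧ ∑ a, X a = 1}

/-- The cost tensor `M(J₁,J₂) = ‖J₁ - J₂‖₂` on multi-indices. -/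
def cost {d : ℕ} (I : Fin d → ℕ) (a b : Idx I) : ℝ :=
  Real.sqrt (∑ j : Fin d, (((a j : ℕ) : ℝ) - ((b j : ℕ) : ℝ)) ^ 2)

/-- The set of couplings between `p` and `q`: nonnegative kernels with row sums `p`
and column sums `q`. -/
def couplings {d : ℕ} (I : Fin d → ℕ) (p q : Idx I → ℝ) : Set (Idx I → Idx I → ℝ) :=
  {T | (∀ a b, 0 ≤ T a b) ∧ (∀ a, ∑ b, T a b = p a) ∧ (∀ b, ∑ a, T a b = q b)}

/-- The entropy-regularized Wasserstein distance
`W_γ(p,q) = min_{T ∈ U(p,q)} ⟨M², T⟩ + γ⟨T, log T⟩`. -/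
def Wass {d : ℕ} (I : Fin d → ℕ) (γ : ℝ) (p q : Idx I → ℝ) : ℝ :=
  sInf ((fun T : Idx I → Idx I → ℝ =>
      ∑ a, ∑ b, (cost I a b * T a b + γ * (T a b * Real.log (T a b)))) ''
    couplings I p q)

/-- The simplex-restricted conjugate `H*_X(g) = sup_{y ∈ Σ} ⟨g,y⟩ - W_γ(X,y)`. -/
def Hconj {d : ℕ} (I : Fin d → ℕ) (γ : ℝ) (X g : Idx I → ℝ) : ℝ :=
  sSup ((fun y : Idx I → ℝ => (∑ a, g a * y a) - Wass I γ X y) '' probSet I)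

/-- The probability simplex over an arbitrary finite index type. -/
def simplexF (κ : Type*) [Fintype κ] : Set (κ → ℝ) :=
  {x | (∀ i, 0 ≤ x i) ∧ ∑ i, x i = 1}

/-- The conjugate `F*_{λ₀}(g) = sup_{λ ∈ Σ_κ} ⟨g,λ⟩ - ½‖λ-λ₀‖²`. -/
def Fconj {κ : Type*} [Fintype κ] (lam0 g : κ → ℝ) : ℝ :=
  sSup ((fun lam : κ → ℝ =>
      (∑ i, g i * lam i) - 1 / 2 * ∑ i, (lam i - lam0 i) ^ 2) '' simplexF κ)


/-- Matrices in `ℝ^{r×N}` whose `N` columns lie in the probability simplex `Σ_r`. -/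
def colSimplex (r N : ℕ) : Set (Fin r → Fin N → ℝ) :=
  {Y | ∀ j : Fin N, (fun k => Y k j) ∈ simplexF (Fin r)}

open Set Matrix
open scoped Pointwise

section LagrangeDuality

variable {E ι : Type*} [NormedAddCommGroup E] [NormedSpace ℝ E] [Fintype ι]

def lagrangeDual (K : Set E) (c : E → ℝ) (A : E →L[ℝ] (ι → ℝ)) (g : ι → ℝ) : ℝ :=
  sSup ((fun z => g ⬝ᵥ A z - c z) '' K)

lemma exists_dotProduct_add_mul_lt_of_notMem [DecidableEq ι] {S : Set ((ι → ℝ) × ℝ)}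
    (hSc : Convex ℝ S) (hS : IsClosed S) {x : (ι → ℝ) × ℝ} (hx : x ∉ S) :
    ∃ (h : ι → ℝ) (β : ℝ), ∀ s ∈ S, h ⬝ᵥ x.1 + β * x.2 < h ⬝ᵥ s.1 + β * s.2 := by
  obtain ⟨f, u, hxu, huS⟩ := geometric_hahn_banach_point_closed hSc hS hx
  set h : ι → ℝ := fun i => f (fun j => if i = j then 1 else 0, 0)
  have hf : ∀ y : (ι → ℝ) × ℝ, f y = h ⬝ᵥ y.1 + f (0, 1) * y.2 := by
    rintro ⟨w, t⟩
    have hsplit : f (w, t) = f (w, 0) + t * f (0, 1) := by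
      rw [← smul_eq_mul, ← map_smul, ← map_add]; simp
    have hw : f (w, 0) = h ⬝ᵥ w := by
      simpa [dotProduct, mul_comm] using
        LinearMap.pi_apply_eq_sum_univ (f.comp (ContinuousLinearMap.inl ℝ _ ℝ)).toLinearMap w
    rw [hsplit, hw, mul_comm]
  exact ⟨h, f (0, 1), fun s hs => by rw [← hf, ← hf]; exact hxu.trans (huS s hs)⟩

variable {K : Set E} {c : E → ℝ} {A : E →L[ℝ] (ι → ℝ)}

lemma neg_le_lagrangeDual (hK : IsCompact K) (hc : Continuous c) {z : E} (hz : z ∈ K)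
    (hAz : A z = 0) (g : ι → ℝ) : -c z ≤ lagrangeDual K c A g := by
  refine le_csSup (hK.image (by fun_prop)).bddAbove ⟨z, hz, ?_⟩
  simp [hAz]

lemma exists_lagrangeDual_le (hK : IsCompact K) (hcv : ConvexOn ℝ K c) (hc : Continuous c)
    {zs : E} (hzs : zs ∈ K) (hAzs : A zs = 0) (hmin : ∀ z ∈ K, A z = 0 → c zs ≤ c z)
    {ε : ℝ} (hε : 0 < ε) : ∃ g, lagrangeDual K c A g ≤ -c zs + ε := by
  classical
  obtain ⟨m, hm⟩ := (hK.image hc).bddBelow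
  obtain ⟨M, hM⟩ := (hK.image hc).bddAbove
  -- the epigraph of `c` over `K`, truncated at `M` to make it compact
  set S₀ : Set (E × ℝ) := {p | p.1 ∈ K ∧ c p.1 ≤ p.2} ∩ {p | p.2 ≤ M}
  have hS₀ : IsCompact S₀ := by
    refine (hK.prod (isCompact_Icc (a := m) (b := M))).of_isClosed_subset ?_ ?_
    · exact ((hK.isClosed.preimage continuous_fst).inter
        (isClosed_le (hc.comp continuous_fst) continuous_snd)).inter
        (isClosed_le continuous_snd continuous_const)
    · rintro ⟨z, t⟩ ⟨⟨hz, hzt⟩, htM⟩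
      exact ⟨hz, (hm ⟨z, hz, rfl⟩).trans hzt, htM⟩
  set L := A.prodMap (ContinuousLinearMap.id ℝ ℝ)
  have hS₀c : Convex ℝ S₀ :=
    hcv.convex_epigraph.inter ((convex_Iic M).linear_preimage (LinearMap.snd ℝ E ℝ))
  have hnotMem : ((0, c zs - ε) : (ι → ℝ) × ℝ) ∉ L '' S₀ := by
    rintro ⟨⟨z, t⟩, ⟨⟨hz, hzt⟩, -⟩, he⟩
    simp only [L, ContinuousLinearMap.coe_prodMap', Prod.map_apply, ContinuousLinearMap.id_apply,
      Prod.mk.injEq] at he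
    linarith [hmin z hz he.1]
  obtain ⟨h, β, hsep⟩ := exists_dotProduct_add_mul_lt_of_notMem (hS₀c.linear_image L.toLinearMap)
    (hS₀.image L.continuous).isClosed hnotMem
  have hmem : ∀ z ∈ K, (A z, c z) ∈ L '' S₀ :=
    fun z hz => ⟨(z, c z), ⟨⟨hz, le_rfl⟩, hM ⟨z, hz, rfl⟩⟩, rfl⟩
  have hβ : 0 < β := by
    have hsep_zs := hsep _ (hmem zs hzs)
    simp only [hAzs, dotProduct_zero] at hsep_zs
    nlinarith
  refine ⟨-β⁻¹ • h, csSup_le ⟨_, zs, hzs, rfl⟩ ?_⟩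
  rintro _ ⟨z, hz, rfl⟩
  have hsep_z := hsep _ (hmem z hz)
  simp only [dotProduct_zero, zero_add] at hsep_z
  have key : c zs - ε - c z < β⁻¹ * (h ⬝ᵥ A z) := by
    rw [lt_inv_mul_iff₀ hβ]; linarith
  simp only [smul_dotProduct, smul_eq_mul]
  linarith

theorem sInf_image_ker_eq_neg_sInf_range_lagrangeDual (hK : IsCompact K)
    (hcv : ConvexOn ℝ K c) (hc : Continuous c) (hfeas : ∃ z ∈ K, A z = 0) :
    sInf (c '' {z ∈ K | A z = 0}) = -sInf (range (lagrangeDual K c A)) := by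
  obtain ⟨zs, ⟨hzs, hAzs⟩, hmin⟩ :=
    (hK.inter_right (isClosed_singleton.preimage A.continuous)).exists_isMinOn hfeas hc.continuousOn
  have hlow := neg_le_lagrangeDual (A := A) hK hc hzs hAzs
  have hprimal : sInf (c '' {z ∈ K | A z = 0}) = c zs :=
    IsLeast.csInf_eq ⟨⟨zs, ⟨hzs, hAzs⟩, rfl⟩, forall_mem_image.2 fun z hz => hmin hz⟩
  have hdual : sInf (range (lagrangeDual K c A)) = -c zs := by
    refine le_antisymm (le_of_forall_pos_le_add fun ε hε => ?_)
      (le_csInf (range_nonempty _) (forall_mem_range.2 hlow))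
    obtain ⟨g, hg⟩ := exists_lagrangeDual_le hK hcv hc hzs hAzs (fun z hz hAz => hmin ⟨hz, hAz⟩) hε
    exact (csInf_le ⟨_, forall_mem_range.2 hlow⟩ ⟨g, rfl⟩).trans hg
  rw [hprimal, hdual, neg_neg]

lemma bddBelow_range_lagrangeDual (hK : IsCompact K) (hc : Continuous c)
    (hfeas : ∃ z ∈ K, A z = 0) : BddBelow (range (lagrangeDual K c A)) :=
  let ⟨_, hz, hAz⟩ := hfeas
  ⟨_, forall_mem_range.2 (neg_le_lagrangeDual hK hc hz hAz)⟩

end LagrangeDuality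

lemma csInf_finsetSum {κ : Type*} (t : Finset κ) {s : κ → Set ℝ} (hne : ∀ i, (s i).Nonempty)
    (hbdd : ∀ i, BddBelow (s i)) : sInf (∑ i ∈ t, s i) = ∑ i ∈ t, sInf (s i) := by
  classical
  induction t using Finset.induction_on with
  | empty => simp
  | insert i t hi ih =>
    have hne_t : (∑ j ∈ t, s j).Nonempty :=
      ⟨_, Set.finsetSum_mem_finsetSum t s _ fun j _ => (hne j).some_mem⟩
    have hbdd_t : BddBelow (∑ j ∈ t, s j) := by
      choose b hb using hbdd
      refine ⟨∑ j ∈ t, b j, fun x hx => ?_⟩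
      obtain ⟨g, hg, rfl⟩ := (Set.mem_finsetSum t s x).1 hx
      exact Finset.sum_le_sum fun j hj => hb j (hg hj)
    rw [Finset.sum_insert hi, Finset.sum_insert hi, csInf_add (hne i) (hbdd i) hne_t hbdd_t, ih]

lemma image_sum_columns {α κ R β : Type*} [Fintype κ] [AddCommMonoid β] (F : κ → (α → R) → β)
    (S : κ → Set (α → R)) :
    (fun Y : α → κ → R => ∑ i, F i (fun k => Y k i)) '' {Y | ∀ i, (fun k => Y k i) ∈ S i} =
      ∑ i, F i '' S i := by
  ext v
  simp only [mem_image, Set.mem_fintype_sum, Set.mem_ofPred_eq]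
  constructor
  · rintro ⟨Y, hY, rfl⟩
    exact ⟨_, fun i => ⟨_, hY i, rfl⟩, rfl⟩
  · rintro ⟨g, hg, rfl⟩
    choose x hx hxg using hg
    exact ⟨fun k i => x i k, hx, by simp only [hxg]⟩

lemma mulVec_mem_stdSimplex {m n : Type*} [Fintype m] [Fintype n] {D : Matrix m n ℝ}
    (hD : ∀ k, (fun a => D a k) ∈ stdSimplex ℝ m) {x : n → ℝ} (hx : x ∈ stdSimplex ℝ n) :
    D *ᵥ x ∈ stdSimplex ℝ m := by
  refine ⟨fun a => Finset.sum_nonneg fun k _ => mul_nonneg ((hD k).1 a) (hx.1 k), ?_⟩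
  simp only [mulVec, dotProduct]
  rw [Finset.sum_comm]
  simp only [← Finset.sum_mul, (hD _).2, one_mul, hx.2]

section Transport

variable {d : ℕ} {I : Fin d → ℕ}

def entropicCost (I : Fin d → ℕ) (γ : ℝ) (T : Idx I → Idx I → ℝ) : ℝ :=
  ∑ a, ∑ b, (cost I a b * T a b + γ * (T a b * Real.log (T a b)))

def plans (I : Fin d → ℕ) (p : Idx I → ℝ) : Set (Idx I → Idx I → ℝ) :=
  {T | 0 ≤ T ∧ ∀ a, ∑ b, T a b = p a}

@[fun_prop]
lemma continuous_entropicCost (γ : ℝ) : Continuous (entropicCost I γ) := by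
  refine continuous_finsetSum _ fun a _ => continuous_finsetSum _ fun b _ => ?_
  have hab : Continuous fun T : Idx I → Idx I → ℝ => T a b := by fun_prop
  exact (continuous_const.mul hab).add (continuous_const.mul (Real.continuous_mul_log.comp hab))

lemma convexOn_entropicCost {γ : ℝ} (hγ : 0 ≤ γ) : ConvexOn ℝ (Ici 0) (entropicCost I γ) := by
  refine ⟨convex_Ici 0, fun T hT S hS s t hs ht hst => ?_⟩
  simp only [entropicCost, smul_eq_mul, Finset.mul_sum, ← Finset.sum_add_distrib]
  refine Finset.sum_le_sum fun a _ => Finset.sum_le_sum fun b _ => ?_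
  have hlog := Real.convexOn_mul_log.2 (hT a b) (hS a b) hs ht hst
  simp only [Pi.add_apply, Pi.smul_apply, smul_eq_mul] at hlog ⊢
  nlinarith [mul_le_mul_of_nonneg_left hlog hγ]

lemma isClosed_plans (p : Idx I → ℝ) : IsClosed (plans I p) := by
  simp only [plans, ofPred_and, ofPred_forall]
  exact isClosed_Ici.inter (isClosed_iInter fun a => isClosed_eq (by fun_prop) continuous_const)

lemma plans_subset_Icc {p : Idx I → ℝ} (hp : p ∈ probSet I) : plans I p ⊆ Icc 0 1 :=
  fun T hT => ⟨hT.1, fun a b => calc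
    T a b ≤ ∑ b', T a b' := Finset.single_le_sum (fun b' _ => hT.1 a b') (Finset.mem_univ b)
    _ = p a := hT.2 a
    _ ≤ 1 := (mem_Icc_of_mem_stdSimplex hp a).2⟩

lemma isCompact_plans {p : Idx I → ℝ} (hp : p ∈ probSet I) : IsCompact (plans I p) :=
  isCompact_Icc.of_isClosed_subset (isClosed_plans p) (plans_subset_Icc hp)

lemma convex_plans (p : Idx I → ℝ) : Convex ℝ (plans I p) := by
  rintro T ⟨hT0, hT⟩ S ⟨hS0, hS⟩ s t hs ht hst
  refine ⟨add_nonneg (smul_nonneg hs hT0) (smul_nonneg ht hS0), fun a => ?_⟩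
  simp only [Pi.add_apply, Pi.smul_apply, smul_eq_mul, Finset.sum_add_distrib, ← Finset.mul_sum,
    hT, hS, ← add_mul, hst, one_mul]

lemma couplings_subset_plans (p q : Idx I → ℝ) : couplings I p q ⊆ plans I p :=
  fun _ hT => ⟨hT.1, hT.2.1⟩

lemma outer_mem_couplings {p q : Idx I → ℝ} (hp : p ∈ probSet I) (hq : q ∈ probSet I) :
    (fun a b => p a * q b) ∈ couplings I p q :=
  ⟨fun a b => mul_nonneg (hp.1 a) (hq.1 b), fun a => by rw [← Finset.mul_sum, hq.2, mul_one],
    fun b => by rw [← Finset.sum_mul, hp.2, one_mul]⟩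

lemma isCompact_couplings {p : Idx I → ℝ} (hp : p ∈ probSet I) (q : Idx I → ℝ) :
    IsCompact (couplings I p q) := by
  refine (isCompact_plans hp).of_isClosed_subset ?_ (couplings_subset_plans p q)
  have hdecomp : couplings I p q = plans I p ∩ ⋂ b, {T | ∑ a, T a b = q b} := by
    ext T
    simp only [couplings, plans, mem_inter_iff, mem_iInter, Set.mem_ofPred_eq, and_assoc]
    rfl
  rw [hdecomp]
  exact (isClosed_plans p).inter
    (isClosed_iInter fun b => isClosed_eq (by fun_prop) continuous_const)

lemma Wass_isLeast (γ : ℝ) {p q : Idx I → ℝ} (hp : p ∈ probSet I) (hq : q ∈ probSet I) :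
    IsLeast (entropicCost I γ '' couplings I p q) (Wass I γ p q) := by
  obtain ⟨T, hT, hmin⟩ := (isCompact_couplings hp q).exists_isMinOn
    ⟨_, outer_mem_couplings hp hq⟩ (continuous_entropicCost γ).continuousOn
  have hL : IsLeast (entropicCost I γ '' couplings I p q) (entropicCost I γ T) :=
    ⟨⟨T, hT, rfl⟩, forall_mem_image.2 fun _ hS => hmin hS⟩
  have hW : Wass I γ p q = entropicCost I γ T := hL.csInf_eq
  rwa [hW]

end Transport

section Column

variable {d : ℕ} {I : Fin d → ℕ} {κ : Type*} [Fintype κ]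

def columnPrimal (I : Fin d → ℕ) (γ τ : ℝ) (p : Idx I → ℝ) (D : Idx I → κ → ℝ)
    (lam0 lam : κ → ℝ) : ℝ :=
  Wass I γ p (fun a => ∑ k, D a k * lam k) + τ / 2 * ∑ k, (lam k - lam0 k) ^ 2

def columnDual (I : Fin d → ℕ) (γ τ : ℝ) (p : Idx I → ℝ) (D : Idx I → κ → ℝ)
    (lam0 : κ → ℝ) (g : Idx I → ℝ) : ℝ :=
  Hconj I γ p (fun a => -(g a)) + τ * Fconj lam0 (fun k => (∑ a, D a k * g a) / τ)

-- With the coupling made a variable, the column problem minimises `columnCost` over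
-- `simplexF κ ×ˢ plans I p` subject to `columnConstraint D z = 0`.
def columnCost (I : Fin d → ℕ) (γ τ : ℝ) (lam0 : κ → ℝ)
    (z : (κ → ℝ) × (Idx I → Idx I → ℝ)) : ℝ :=
  entropicCost I γ z.2 + τ / 2 * ∑ k, (z.1 k - lam0 k) ^ 2

def columnConstraint (D : Idx I → κ → ℝ) :
    (κ → ℝ) × (Idx I → Idx I → ℝ) →L[ℝ] (Idx I → ℝ) :=
  LinearMap.toContinuousLinearMap
    { toFun := fun z b => ∑ a, z.2 a b - ∑ k, D b k * z.1 k
      map_add' := fun z w => by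
        ext b
        simp only [Prod.fst_add, Prod.snd_add, Pi.add_apply, mul_add, Finset.sum_add_distrib]
        ring
      map_smul' := fun t z => by
        ext b
        simp only [Prod.smul_fst, Prod.smul_snd, Pi.smul_apply, smul_eq_mul, RingHom.id_apply,
          mul_sub, Finset.mul_sum, mul_left_comm] }

lemma columnConstraint_apply (D : Idx I → κ → ℝ) (z : (κ → ℝ) × (Idx I → Idx I → ℝ)) (b : Idx I) :
    columnConstraint D z b = ∑ a, z.2 a b - ∑ k, D b k * z.1 k :=
  rfl

lemma columnConstraint_eq_zero_iff {D : Idx I → κ → ℝ} {z : (κ → ℝ) × (Idx I → Idx I → ℝ)} :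
    columnConstraint D z = 0 ↔ ∀ b, ∑ a, z.2 a b = ∑ k, D b k * z.1 k := by
  simp only [funext_iff, Pi.zero_apply, columnConstraint_apply, sub_eq_zero]

lemma mem_couplings_iff_columnConstraint {p : Idx I → ℝ} {D : Idx I → κ → ℝ} {lam : κ → ℝ}
    {T : Idx I → Idx I → ℝ} :
    T ∈ couplings I p (fun b => ∑ k, D b k * lam k) ↔
      T ∈ plans I p ∧ columnConstraint D (lam, T) = 0 := by
  rw [columnConstraint_eq_zero_iff]
  exact ⟨fun h => ⟨⟨h.1, h.2.1⟩, h.2.2⟩, fun h => ⟨h.1.1, h.1.2, h.2⟩⟩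

lemma convexOn_sum_sq_sub (lam0 : κ → ℝ) :
    ConvexOn ℝ univ (fun lam : κ → ℝ => ∑ k, (lam k - lam0 k) ^ 2) := by
  refine ⟨convex_univ, fun x _ y _ s t hs ht hst => ?_⟩
  simp only [smul_eq_mul, Finset.mul_sum, ← Finset.sum_add_distrib]
  refine Finset.sum_le_sum fun k _ => ?_
  simp only [Pi.add_apply, Pi.smul_apply, smul_eq_mul]
  have ht' : t = 1 - s := by linarith
  subst ht'
  nlinarith [mul_nonneg (mul_nonneg hs ht) (sq_nonneg (x k - y k))]

lemma continuous_columnCost (γ τ : ℝ) (lam0 : κ → ℝ) :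
    Continuous (columnCost I γ τ lam0) := by
  unfold columnCost; fun_prop

lemma convexOn_columnCost {γ τ : ℝ} (hγ : 0 ≤ γ) (hτ : 0 ≤ τ) (lam0 : κ → ℝ) :
    ConvexOn ℝ (univ ×ˢ Ici 0) (columnCost I γ τ lam0) := by
  have hT := (convexOn_entropicCost (I := I) hγ).comp_linearMap (LinearMap.snd ℝ (κ → ℝ) _)
  have hlam := ((convexOn_sum_sq_sub lam0).smul (by positivity : 0 ≤ τ / 2)).comp_linearMap
    (LinearMap.fst ℝ (κ → ℝ) (Idx I → Idx I → ℝ))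
  rw [preimage_univ] at hlam
  rw [univ_prod]
  exact hT.add (hlam.subset (subset_univ _) hT.1)

variable {γ τ : ℝ} {p : Idx I → ℝ} {D : Idx I → κ → ℝ} {lam0 : κ → ℝ}

lemma columnPrimal_mem_image_columnCost (hp : p ∈ probSet I)
    (hD : ∀ k, (fun a => D a k) ∈ probSet I) {lam : κ → ℝ} (hlam : lam ∈ simplexF κ) :
    columnPrimal I γ τ p D lam0 lam ∈
      columnCost I γ τ lam0 '' {z ∈ simplexF κ ×ˢ plans I p | columnConstraint D z = 0} := by
  obtain ⟨T, hT, hTW⟩ := (Wass_isLeast γ hp (mulVec_mem_stdSimplex hD hlam)).1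
  obtain ⟨hTp, hAT⟩ := mem_couplings_iff_columnConstraint.1 hT
  exact ⟨(lam, T), ⟨⟨hlam, hTp⟩, hAT⟩, by rw [columnCost, hTW]; rfl⟩

lemma sInf_image_columnPrimal (hp : p ∈ probSet I) (hD : ∀ k, (fun a => D a k) ∈ probSet I) :
    sInf (columnPrimal I γ τ p D lam0 '' simplexF κ) =
      sInf (columnCost I γ τ lam0 '' {z ∈ simplexF κ ×ˢ plans I p | columnConstraint D z = 0}) := by
  refine csInf_eq_csInf_of_forall_exists_le ?_ ?_
  · rintro _ ⟨lam, hlam, rfl⟩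
    exact ⟨_, columnPrimal_mem_image_columnCost hp hD hlam, le_rfl⟩
  · rintro _ ⟨⟨lam, T⟩, ⟨⟨hlam, hTp⟩, hAT⟩, rfl⟩
    have hT := mem_couplings_iff_columnConstraint.2 ⟨hTp, hAT⟩
    refine ⟨_, ⟨lam, hlam, rfl⟩, add_le_add_left ?_ _⟩
    exact (Wass_isLeast γ hp (mulVec_mem_stdSimplex hD hlam)).2 ⟨T, hT, rfl⟩

lemma colSum_mem_probSet (hp : p ∈ probSet I) {T : Idx I → Idx I → ℝ} (hT : T ∈ plans I p) :
    (fun b => ∑ a, T a b) ∈ probSet I :=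
  ⟨fun b => Finset.sum_nonneg fun a _ => hT.1 a b, by
    simp only [Finset.sum_comm (γ := Idx I), hT.2, hp.2]⟩

lemma Hconj_neg_eq_sSup_plans (hp : p ∈ probSet I) (g : Idx I → ℝ) :
    Hconj I γ p (fun a => -(g a)) =
      sSup ((fun T => -g ⬝ᵥ (fun b => ∑ a, T a b) - entropicCost I γ T) '' plans I p) := by
  refine csSup_eq_csSup_of_forall_exists_le ?_ ?_
  · rintro _ ⟨q, hq, rfl⟩
    obtain ⟨T, hT, hTW⟩ := (Wass_isLeast γ hp hq).1
    refine ⟨_, ⟨T, couplings_subset_plans p q hT, rfl⟩, le_of_eq ?_⟩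
    have hcol : (fun b => ∑ a, T a b) = q := funext hT.2.2
    dsimp only
    rw [hcol, hTW]
    rfl
  · rintro _ ⟨T, hT, rfl⟩
    refine ⟨_, ⟨_, colSum_mem_probSet hp hT, rfl⟩, sub_le_sub_left ?_ _⟩
    exact (Wass_isLeast γ hp (colSum_mem_probSet hp hT)).2 ⟨T, ⟨hT.1, hT.2, fun _ => rfl⟩, rfl⟩

lemma mul_Fconj_eq_sSup_simplex (hτ : 0 < τ) (g : Idx I → ℝ) :
    τ * Fconj lam0 (fun k => (∑ a, D a k * g a) / τ) =
      sSup ((fun lam => g ⬝ᵥ D *ᵥ lam - τ / 2 * ∑ k, (lam k - lam0 k) ^ 2) '' simplexF κ) := by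
  rw [Fconj, ← smul_eq_mul, ← Real.sSup_smul_of_nonneg hτ.le, ← image_smul, image_image]
  congr 1
  refine image_congr fun lam _ => ?_
  have hswap : ∑ k, (∑ a, D a k * g a) / τ * lam k = (g ⬝ᵥ D *ᵥ lam) / τ := by
    simp only [dotProduct, mulVec, Finset.sum_div, Finset.sum_mul, Finset.mul_sum]
    rw [Finset.sum_comm]
    exact Finset.sum_congr rfl fun a _ => Finset.sum_congr rfl fun k _ => by ring
  rw [hswap, smul_eq_mul]
  field_simp

lemma columnDual_eq_lagrangeDual (hp : p ∈ probSet I) (hτ : 0 < τ) (hlam0 : lam0 ∈ simplexF κ)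
    (g : Idx I → ℝ) :
    columnDual I γ τ p D lam0 g = lagrangeDual (simplexF κ ×ˢ plans I p)
      (columnCost I γ τ lam0) (columnConstraint D) (fun a => -(g a)) := by
  set fH := fun T => -g ⬝ᵥ (fun b => ∑ a, T a b) - entropicCost I γ T
  set fF := fun lam => g ⬝ᵥ D *ᵥ lam - τ / 2 * ∑ k, (lam k - lam0 k) ^ 2
  have hplans : (plans I p).Nonempty := ⟨_, couplings_subset_plans p p (outer_mem_couplings hp hp)⟩
  have hH : IsCompact (fH '' plans I p) := (isCompact_plans hp).image (by fun_prop)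
  have hF : IsCompact (fF '' simplexF κ) := (isCompact_stdSimplex ℝ κ).image (by fun_prop)
  rw [columnDual, Hconj_neg_eq_sSup_plans hp, mul_Fconj_eq_sSup_simplex hτ, add_comm,
    ← csSup_add (Set.Nonempty.image fF ⟨lam0, hlam0⟩) hF.bddAbove (hplans.image fH)
    hH.bddAbove, lagrangeDual, ← image2_add, image2_image_left, image2_image_right, ← image_prod]
  refine congrArg sSup (image_congr fun z _ => ?_)
  simp only [fF, fH, columnCost, columnConstraint_apply, dotProduct, mulVec, Pi.neg_apply,
    neg_mul, mul_sub, Finset.sum_sub_distrib, Finset.sum_neg_distrib]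
  ring

lemma columnConstraint_feasible (hp : p ∈ probSet I) (hD : ∀ k, (fun a => D a k) ∈ probSet I)
    (hlam0 : lam0 ∈ simplexF κ) :
    ∃ z ∈ simplexF κ ×ˢ plans I p, columnConstraint D z = 0 := by
  have hT := outer_mem_couplings hp (mulVec_mem_stdSimplex hD hlam0)
  obtain ⟨hTp, hAT⟩ := mem_couplings_iff_columnConstraint.1 hT
  exact ⟨_, ⟨hlam0, hTp⟩, hAT⟩

lemma range_columnDual (hp : p ∈ probSet I) (hτ : 0 < τ) (hlam0 : lam0 ∈ simplexF κ) :
    range (columnDual I γ τ p D lam0) = range (lagrangeDual (simplexF κ ×ˢ plans I p)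
      (columnCost I γ τ lam0) (columnConstraint D)) := by
  have h : columnDual I γ τ p D lam0 = lagrangeDual (simplexF κ ×ˢ plans I p)
      (columnCost I γ τ lam0) (columnConstraint D) ∘ Neg.neg :=
    funext (columnDual_eq_lagrangeDual hp hτ hlam0)
  rw [h, neg_surjective.range_comp]

theorem sInf_image_columnPrimal_eq_neg_sInf_range_columnDual (hγ : 0 ≤ γ) (hτ : 0 < τ)
    (hp : p ∈ probSet I) (hD : ∀ k, (fun a => D a k) ∈ probSet I) (hlam0 : lam0 ∈ simplexF κ) :
    sInf (columnPrimal I γ τ p D lam0 '' simplexF κ) =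
      -sInf (range (columnDual I γ τ p D lam0)) := by
  rw [sInf_image_columnPrimal hp hD, range_columnDual hp hτ hlam0]
  exact sInf_image_ker_eq_neg_sInf_range_lagrangeDual
    ((isCompact_stdSimplex ℝ κ).prod (isCompact_plans hp))
    ((convexOn_columnCost hγ hτ.le lam0).subset (prod_mono (subset_univ _) fun _ hT => hT.1)
      ((convex_stdSimplex ℝ κ).prod (convex_plans p)))
    (continuous_columnCost γ τ lam0) (columnConstraint_feasible hp hD hlam0)

lemma bddBelow_image_columnPrimal (hp : p ∈ probSet I) (hD : ∀ k, (fun a => D a k) ∈ probSet I) :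
    BddBelow (columnPrimal I γ τ p D lam0 '' simplexF κ) := by
  have hK : IsCompact {z ∈ simplexF κ ×ˢ plans I p | columnConstraint D z = 0} :=
    ((isCompact_stdSimplex ℝ κ).prod (isCompact_plans hp)).inter_right
      (isClosed_eq (columnConstraint D).continuous continuous_const)
  refine (hK.image (continuous_columnCost γ τ lam0)).bddBelow.mono ?_
  rintro _ ⟨lam, hlam, rfl⟩
  exact columnPrimal_mem_image_columnCost hp hD hlam

lemma bddBelow_range_columnDual (hp : p ∈ probSet I) (hD : ∀ k, (fun a => D a k) ∈ probSet I)
    (hτ : 0 < τ) (hlam0 : lam0 ∈ simplexF κ) : BddBelow (range (columnDual I γ τ p D lam0)) := by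
  rw [range_columnDual hp hτ hlam0]
  exact bddBelow_range_lagrangeDual ((isCompact_stdSimplex ℝ κ).prod (isCompact_plans hp))
    (continuous_columnCost γ τ lam0) (columnConstraint_feasible hp hD hlam0)

end Column

theorem stmt19_general {d : ℕ} (I : Fin d → ℕ) (r N : ℕ)
    (γ τ : ℝ) (hγ : 0 < γ) (hτ : 0 < τ)
    (X : Fin N → (Idx I → ℝ)) (hX : ∀ i, X i ∈ probSet I)
    (D : Idx I → Fin r → ℝ) (hD : ∀ k, (fun a => D a k) ∈ probSet I)
    (Λ₀ : Fin r → Fin N → ℝ) (hΛ₀ : Λ₀ ∈ colSimplex r N) :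
    sInf ((fun Λ : Fin r → Fin N → ℝ =>
        ∑ i, (Wass I γ (X i) (fun a => ∑ k, D a k * Λ k i)
          + τ / 2 * ∑ k, (Λ k i - Λ₀ k i) ^ 2)) '' colSimplex r N) =
      - sInf (Set.range (fun G : Idx I → Fin N → ℝ =>
        ∑ i, (Hconj I γ (X i) (fun a => -(G a i))
          + τ * Fconj (fun k => Λ₀ k i) (fun k => (∑ a, D a k * G a i) / τ)))) := by
  change sInf ((fun Λ : Fin r → Fin N → ℝ =>
      ∑ i, columnPrimal I γ τ (X i) D (fun k => Λ₀ k i) (fun k => Λ k i)) '' colSimplex r N) =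
    -sInf (range fun G : Idx I → Fin N → ℝ =>
      ∑ i, columnDual I γ τ (X i) D (fun k => Λ₀ k i) (fun a => G a i))
  have hdual : (range fun G : Idx I → Fin N → ℝ =>
      ∑ i, columnDual I γ τ (X i) D (fun k => Λ₀ k i) (fun a => G a i)) =
      ∑ i, range (columnDual I γ τ (X i) D (fun k => Λ₀ k i)) := by
    simpa only [mem_univ, implies_true, ofPred_true, image_univ] using
      image_sum_columns (fun i => columnDual I γ τ (X i) D (fun k => Λ₀ k i)) (fun _ => univ)
  rw [colSimplex, image_sum_columns, hdual,
    csInf_finsetSum _ (fun i => Set.Nonempty.image _ ⟨_, hΛ₀ i⟩)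
      (fun i => bddBelow_image_columnPrimal (hX i) hD),
    csInf_finsetSum _ (fun _ => range_nonempty _)
      (fun i => bddBelow_range_columnDual (hX i) hD hτ (hΛ₀ i)),
    ← Finset.sum_neg_distrib]
  exact Finset.sum_congr rfl fun i _ =>
    sInf_image_columnPrimal_eq_neg_sInf_range_columnDual hγ.le hτ (hX i) hD (hΛ₀ i)

/-- **Strong duality for the `Λ`-subproblem.**
`min_{Λ ∈ Σ^N_r} Σ_i [H_{X_i}(D ×_{d+1} Λ[:,i]) + (τ/2)‖Λ[:,i]-Λ₀[:,i]‖²]`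
`= - min_G Σ_i [H*_{X_i}(-G[:,i]) + τ F*_{Λ₀[:,i]}((D ×_{≤d} G)[:,i]/τ)]`. -/
theorem stmt19 {d : ℕ} (I : Fin d → ℕ) (hI : ∀ j, 0 < I j) (r N : ℕ) (hr : 0 < r)
    (hN : 0 < N) (γ τ : ℝ) (hγ : 0 < γ) (hτ : 0 < τ)
    (X : Fin N → (Idx I → ℝ)) (hX : ∀ i, X i ∈ probSet I)
    (D : Idx I → Fin r → ℝ) (hD : ∀ k, (fun a => D a k) ∈ probSet I)
    -- every fiber of D along the last mode is not identically zero
    (hfib : ∀ a : Idx I, ∃ k : Fin r, D a k ≠ 0)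
    (Λ₀ : Fin r → Fin N → ℝ) (hΛ₀ : Λ₀ ∈ colSimplex r N) :
    sInf ((fun Λ : Fin r → Fin N → ℝ =>
        ∑ i, (Wass I γ (X i) (fun a => ∑ k, D a k * Λ k i)
          + τ / 2 * ∑ k, (Λ k i - Λ₀ k i) ^ 2)) '' colSimplex r N) =
      - sInf (Set.range (fun G : Idx I → Fin N → ℝ =>
        ∑ i, (Hconj I γ (X i) (fun a => -(G a i))
          + τ * Fconj (fun k => Λ₀ k i) (fun k => (∑ a, D a k * G a i) / τ)))) :=
  stmt19_general I r N γ τ hγ hτ X hX D hD Λ₀ hΛ₀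

end WDL19
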